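/- For a one-layer ReLU network with zero biases, a_k(x) = (∑_j x_j w_{jk})⁺, and similarity y(x,x') = ∑_k a_k(x)a_k(x'), the BiLRP attribution with γ = 0, R_{ii'} = ∑_k [x_i w_{ik} 1_{a_k(x)>0}]·[x'_{i'} w_{i'k} 1_{a_k(x')>0}], equals the Hessian×Product attribution x_i x'_{i'}[∂²y/∂x_i∂x'_{i'}](x,x') wherever y is twice differentiable. -/

import Mathlib

/-!
Away from the kinks, each unit `max (⟪z, w_k⟫) 0` is locally either linear or zero, so its
derivative is `1[⟪x, w_k⟫ > 0] • w_k`. Since `y` is a sum of products of a unit in `x` and a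
unit in `x'`, differentiating once in each argument leaves
`∑ k, 1[⟪x, w_k⟫ > 0] w_{ik} · 1[⟪x', w_k⟫ > 0] w_{i'k}`, which times `x_i x'_{i'}` is the
BiLRP relevance.
-/

open Finset

theorem hasDerivAt_relu {t : ℝ} (ht : t ≠ 0) :
    HasDerivAt (fun s : ℝ => max s 0) (if 0 < t then 1 else 0) t := by
  rcases ht.lt_or_gt with hneg | hpos
  · rw [if_neg hneg.not_gt]
    refine (hasDerivAt_const t (0 : ℝ)).congr_of_eventuallyEq ?_
    filter_upwards [eventually_lt_nhds hneg] with s hs using max_eq_right hs.le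
  · rw [if_pos hpos]
    refine (hasDerivAt_id t).congr_of_eventuallyEq ?_
    filter_upwards [eventually_gt_nhds hpos] with s hs using max_eq_left hs.le

theorem HasFDerivAt.relu {E : Type*} [NormedAddCommGroup E] [NormedSpace ℝ E]
    {f : E → ℝ} {f' : E →L[ℝ] ℝ} {x : E} (hf : HasFDerivAt f f' x) (hfx : f x ≠ 0) :
    HasFDerivAt (fun z => max (f z) 0) ((if 0 < f x then (1 : ℝ) else 0) • f') x :=
  (hasDerivAt_relu hfx).comp_hasFDerivAt x hf

theorem fderiv_sum_relu_mul_apply {ι E : Type*} [Fintype ι] [NormedAddCommGroup E]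
    [NormedSpace ℝ E] (ℓ : ι → E →L[ℝ] ℝ) (b : ι → ℝ) {x : E} (hx : ∀ k, ℓ k x ≠ 0) (v : E) :
    fderiv ℝ (fun z => ∑ k, max (ℓ k z) 0 * b k) x v
      = ∑ k, (if 0 < ℓ k x then (1 : ℝ) else 0) * ℓ k v * b k := by
  have hderiv := HasFDerivAt.fun_sum fun k (_ : k ∈ univ) =>
    ((ℓ k).hasFDerivAt.relu (hx k)).mul_const (b k)
  rw [hderiv.fderiv]
  simp only [_root_.sum_apply, smul_apply, smul_eq_mul]
  exact sum_congr rfl fun k _ => by ring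

section dotCLM

variable {ι : Type*} [Fintype ι]

noncomputable def dotCLM (c : ι → ℝ) : (ι → ℝ) →L[ℝ] ℝ :=
  ∑ j, c j • ContinuousLinearMap.proj j

theorem dotCLM_apply (c v : ι → ℝ) : dotCLM c v = ∑ j, v j * c j := by
  simp [dotCLM, mul_comm]

theorem dotCLM_single [DecidableEq ι] (c : ι → ℝ) (i : ι) :
    dotCLM c (Pi.single i 1) = c i := by
  simp [dotCLM_apply, Pi.single_apply]

theorem fderiv_sum_relu_dotProduct_mul_single {κ : Type*} [Fintype κ] [DecidableEq ι]
    (w : ι → κ → ℝ) (b : κ → ℝ) {x : ι → ℝ} (hx : ∀ k, ∑ j, x j * w j k ≠ 0) (i : ι) :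
    fderiv ℝ (fun z => ∑ k, max (∑ j, z j * w j k) 0 * b k) x (Pi.single i 1)
      = ∑ k, (if 0 < ∑ j, x j * w j k then (1 : ℝ) else 0) * w i k * b k := by
  have := fderiv_sum_relu_mul_apply (fun k => dotCLM (w · k)) b
    (by simpa only [dotCLM_apply] using hx) (Pi.single i 1)
  simp_rw [dotCLM_single] at this
  simpa only [dotCLM_apply] using this

end dotCLM

/-- For a one-layer ReLU network with zero biases, the BiLRP
attribution with γ = 0 equals the Hessian×Product attribution wherever y is
twice differentiable (no pre-activation exactly zero). -/
theorem stmt_11 (d h : ℕ) (w : Fin d → Fin h → ℝ)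
    (y : (Fin d → ℝ) → (Fin d → ℝ) → ℝ)
    (hy : ∀ x x', y x x'
      = ∑ k, max (∑ j, x j * w j k) 0 * max (∑ j, x' j * w j k) 0)
    (x x' : Fin d → ℝ)
    (hx : ∀ k, (∑ j, x j * w j k) ≠ 0)
    (hx' : ∀ k, (∑ j, x' j * w j k) ≠ 0)
    (i i' : Fin d) :
    ∑ k, (x i * w i k * (if 0 < ∑ j, x j * w j k then (1:ℝ) else 0)) *
         (x' i' * w i' k * (if 0 < ∑ j, x' j * w j k then (1:ℝ) else 0))
      = x i * x' i' *
        fderiv ℝ (fun z' => fderiv ℝ (fun z => y z z') x (Pi.single i 1)) x'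
          (Pi.single i' 1) := by
  have hinner : ∀ z', fderiv ℝ (fun z => y z z') x (Pi.single i 1)
      = ∑ k, max (∑ j, z' j * w j k) 0
          * ((if 0 < ∑ j, x j * w j k then (1 : ℝ) else 0) * w i k) := by
    intro z'
    rw [show (fun z => y z z') = _ from funext fun z => hy z z',
      fderiv_sum_relu_dotProduct_mul_single w _ hx i]
    exact sum_congr rfl fun k _ => mul_comm _ _
  rw [funext hinner, fderiv_sum_relu_dotProduct_mul_single w _ hx' i', mul_sum]
  exact sum_congr rfl fun k _ => by ring
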